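/- arXiv:1910.02627 — 2 statements merged into one kernel-verified Lean document; each statement's English description precedes it below -/
import Mathlib

section
/- Let f, g, h be real polynomials with only real roots and positive leading coefficients, and let p, q be natural numbers. Then f (p,q)-interlaces g if and only if fh (p,q)-interlaces gh. -/
open Polynomial in
/-- The `i`-th element (1-indexed) of a list, as an `EReal`, with the convention
that it is `+∞` for `i < 1` and `-∞` past the end of the list. -/
noncomputable def seqOf (L : List ℝ) (i : ℤ) : EReal :=
  if i < 1 then ⊤ else (L[(i - 1).toNat]?).elim ⊥ (fun x => (x : EReal))

open Polynomial in
/-- `rSeq f i` is the `i`-th root of `f`, roots listed in non-increasing order,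
with `r_i = +∞` for `i < 1` and `r_i = -∞` for `i` beyond the number of roots. -/
noncomputable def rSeq (f : Polynomial ℝ) (i : ℤ) : EReal :=
  seqOf (f.roots.sort (· ≥ ·)) i

open Polynomial in
/-- `f` `(p,q)`-interlaces `g` : `r_{i+p}(g) ≤ r_i(f) ≤ r_{i-q}(g)` for all `i`. -/
def PQInt (p q : ℕ) (f g : Polynomial ℝ) : Prop :=
  ∀ i : ℤ, rSeq g (i + p) ≤ rSeq f i ∧ rSeq f i ≤ rSeq g (i - q)

open Polynomial in
/-- `f` is real-rooted with positive leading coefficient. -/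
def RR (f : Polynomial ℝ) : Prop :=
  0 < f.leadingCoeff ∧ f.roots.card = f.natDegree

open Polynomial in
/-- number of roots of `f` (with multiplicity) in `[r, ∞)`. -/
noncomputable def nRoots (f : Polynomial ℝ) (r : ℝ) : ℕ :=
  (f.roots.filter (fun x => r ≤ x)).card

/-- `i`-th largest eigenvalue of a Hermitian matrix, as an `EReal`,
with conventions `λ_i = +∞` for `i < 1` and `λ_i = -∞` for `i > n`. -/
noncomputable def eigSeq {m : Type*} [Fintype m] [DecidableEq m]
    {M : Matrix m m ℂ} (hM : M.IsHermitian) (i : ℤ) : EReal :=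
  seqOf ((Finset.univ.val.map hM.eigenvalues).sort (· ≥ ·)) i

/-- positive index of inertia: number of positive eigenvalues. -/
noncomputable def posIdx {m : Type*} [Fintype m] [DecidableEq m]
    {M : Matrix m m ℂ} (hM : M.IsHermitian) : ℕ :=
  (Finset.univ.filter (fun i => 0 < hM.eigenvalues i)).card

/-- negative index of inertia: number of negative eigenvalues. -/
noncomputable def negIdx {m : Type*} [Fintype m] [DecidableEq m]
    {M : Matrix m m ℂ} (hM : M.IsHermitian) : ℕ :=
  (Finset.univ.filter (fun i => hM.eigenvalues i < 0)).card

/-- characteristic polynomial of `M` equals the real polynomial `f` (coerced to `ℂ`). -/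
def HasCharpoly {m : Type*} [Fintype m] [DecidableEq m]
    (M : Matrix m m ℂ) (f : Polynomial ℝ) : Prop :=
  M.charpoly = f.map (algebraMap ℝ ℂ)

/-
Proof idea: on sorted root lists, `x ≤ r_i(f)` holds exactly when `i ≤ N_f(x)`, the number of
roots of `f` in `[x, ∞)`. Hence `f` `(p,q)`-interlaces `g` iff `N_g - p ≤ N_f ≤ N_g + q` pointwise,
and since `N_{fh} = N_f + N_h`, multiplying both polynomials by `h` shifts every count by the
same amount.
-/

open Polynomial

lemma EReal.le_iff_forall_coe_le {a b : EReal} :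
    a ≤ b ↔ ∀ x : ℝ, (x : EReal) ≤ a → (x : EReal) ≤ b :=
  ⟨fun hab _ hx => hx.trans hab,
    fun H => EReal.ge_of_forall_gt_iff_ge.1 fun z hz => H z hz.le⟩

lemma seqOf_cons (a : ℝ) (t : List ℝ) (i : ℤ) :
    seqOf (a :: t) i = if i = 1 then (a : EReal) else seqOf t (i - 1) := by
  unfold seqOf
  rcases lt_trichotomy i 1 with hi | rfl | hi
  · simp [hi, hi.ne, show i - 1 < 1 by omega]
  · simp
  · rw [show (i - 1).toNat = (i - 1 - 1).toNat + 1 by omega]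
    simp [hi.ne', not_lt.2 hi.le, show ¬ i - 1 < 1 by omega]

lemma coe_le_seqOf_iff {L : List ℝ} (hL : L.Pairwise (· ≥ ·)) (x : ℝ) (i : ℤ) :
    (x : EReal) ≤ seqOf L i ↔ i ≤ L.countP (fun y => x ≤ y) := by
  induction L generalizing i with
  | nil => by_cases hi : i < 1 <;> simp [seqOf, hi] <;> omega
  | cons a t ih =>
    rw [List.pairwise_cons] at hL
    rw [seqOf_cons, List.countP_cons]
    by_cases hxa : x ≤ a
    · simp only [hxa, decide_true, if_true]
      split_ifs with hi
      · simp [hxa, hi]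
      · rw [ih hL.2]
        omega
    · have hnone : t.countP (fun y => x ≤ y) = 0 :=
        List.countP_eq_zero.2 fun y hy hxy => hxa ((of_decide_eq_true hxy).trans (hL.1 y hy))
      simp only [hxa, hnone, decide_false, Bool.false_eq_true, if_false]
      split_ifs with hi
      · simp [hxa, hi]
      · rw [ih hL.2, hnone]
        omega

lemma coe_le_rSeq_iff (f : Polynomial ℝ) (x : ℝ) (i : ℤ) :
    (x : EReal) ≤ rSeq f i ↔ i ≤ nRoots f x := by
  rw [rSeq, coe_le_seqOf_iff (Multiset.pairwise_sort _ _), nRoots,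
    ← Multiset.countP_eq_card_filter, ← Multiset.coe_countP, Multiset.sort_eq]

lemma rSeq_le_rSeq_iff (f g : Polynomial ℝ) (i j : ℤ) :
    rSeq f i ≤ rSeq g j ↔ ∀ x : ℝ, i ≤ nRoots f x → j ≤ nRoots g x := by
  rw [EReal.le_iff_forall_coe_le]
  simp only [coe_le_rSeq_iff]

lemma pqInt_iff_nRoots (p q : ℕ) (f g : Polynomial ℝ) :
    PQInt p q f g ↔
      ∀ x : ℝ, (nRoots g x : ℤ) ≤ nRoots f x + p ∧ (nRoots f x : ℤ) ≤ nRoots g x + q := by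
  simp only [PQInt, rSeq_le_rSeq_iff]
  refine ⟨fun H x => ⟨?_, ?_⟩, fun H i => ⟨fun x hx => ?_, fun x hx => ?_⟩⟩
  · have := (H (nRoots g x - p)).1 x (by omega)
    omega
  · have := (H (nRoots f x)).2 x le_rfl
    omega
  · have := (H x).1
    omega
  · have := (H x).2
    omega

lemma nRoots_mul {f h : Polynomial ℝ} (hf : f ≠ 0) (hh : h ≠ 0) (x : ℝ) :
    nRoots (f * h) x = nRoots f x + nRoots h x := by
  rw [nRoots, roots_mul (mul_ne_zero hf hh), Multiset.filter_add, Multiset.card_add]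
  rfl

lemma RR.ne_zero {f : Polynomial ℝ} (hf : RR f) : f ≠ 0 :=
  leadingCoeff_ne_zero.1 hf.1.ne'

theorem stmt1 (f g h : Polynomial ℝ) (hf : RR f) (hg : RR g) (hh : RR h) (p q : ℕ) :
    PQInt p q f g ↔ PQInt p q (f * h) (g * h) := by
  rw [pqInt_iff_nRoots, pqInt_iff_nRoots]
  refine forall_congr' fun x => ?_
  rw [nRoots_mul hf.ne_zero hh.ne_zero, nRoots_mul hg.ne_zero hh.ne_zero]
  omega
end

section
/- Two real-rooted polynomials f and g (with positive leading coefficients) are compatible (i.e., f (1,1)-interlaces g) if and only if there exists a real-rooted polynomial h with positive leading coefficient such that h interlaces f and h interlaces g (i.e., h (1,0)-interlaces both f and g). -/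
/-! Compatibility of `f` and `g` amounts to `r_{i+1}(g) ≤ r_i(f)` and `r_{i+1}(f) ≤ r_i(g)` for
all `i`. A common interlacer `h` yields these by chaining `r_{i+1}(g) ≤ r_i(h) ≤ r_i(f)`.
Conversely, the polynomial whose `i`-th root is `max (r_{i+1}(f)) (r_{i+1}(g))` interlaces both
`f` and `g`. -/

open Polynomial

lemma seqOf_of_lt_one {L : List ℝ} {i : ℤ} (hi : i < 1) : seqOf L i = ⊤ := if_pos hi

lemma seqOf_natCast_add_one (L : List ℝ) (k : ℕ) :
    seqOf L (k + 1) = L[k]?.elim ⊥ (↑) := by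
  simp [seqOf]

lemma antitone_seqOf_iff {L : List ℝ} : Antitone (seqOf L) ↔ L.Pairwise (· ≥ ·) := by
  refine ⟨fun hL => List.pairwise_iff_getElem.2 fun k l hk hl hkl => ?_, fun hL i j hij => ?_⟩
  · have := hL (show (k : ℤ) + 1 ≤ l + 1 by omega)
    simpa [seqOf_natCast_add_one, List.getElem?_eq_getElem hk, List.getElem?_eq_getElem hl]
      using this
  · rcases lt_or_ge i 1 with hi | hi
    · exact (seqOf_of_lt_one hi).symm ▸ le_top
    obtain ⟨k, rfl⟩ : ∃ k : ℕ, i = k + 1 := ⟨(i - 1).toNat, by omega⟩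
    obtain ⟨l, rfl⟩ : ∃ l : ℕ, j = l + 1 := ⟨(j - 1).toNat, by omega⟩
    rw [seqOf_natCast_add_one, seqOf_natCast_add_one]
    rcases lt_or_ge l L.length with hl | hl
    · rw [List.getElem?_eq_getElem hl, List.getElem?_eq_getElem (by omega)]
      exact EReal.coe_le_coe_iff.2 (hL.rel_get_of_le (Fin.mk_le_mk.2 (by omega : k ≤ l)))
    · simp [List.getElem?_eq_none hl]

/-- `getD 0` is never evaluated: `zipWithAll` calls its function only when one argument is
`some`. -/
noncomputable def maxTails (A B : List ℝ) : List ℝ :=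
  List.zipWithAll (fun a b => (Option.merge max a b).getD 0) A.tail B.tail

lemma seqOf_maxTails (A B : List ℝ) {i : ℤ} (hi : 1 ≤ i) :
    seqOf (maxTails A B) i = max (seqOf A (i + 1)) (seqOf B (i + 1)) := by
  obtain ⟨k, rfl⟩ : ∃ k : ℕ, i = k + 1 := ⟨(i - 1).toNat, by omega⟩
  have hk : (k : ℤ) + 1 + 1 = ((k + 1 : ℕ) : ℤ) + 1 := by push_cast; ring
  rw [hk, seqOf_natCast_add_one, seqOf_natCast_add_one, seqOf_natCast_add_one, maxTails,
    List.getElem?_zipWithAll, List.getElem?_tail, List.getElem?_tail]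
  rcases A[k + 1]? with _ | a <;> rcases B[k + 1]? with _ | b <;>
    simp [EReal.coe_strictMono.monotone.map_max]

lemma antitone_seqOf_maxTails {A B : List ℝ} (hA : Antitone (seqOf A)) (hB : Antitone (seqOf B)) :
    Antitone (seqOf (maxTails A B)) := by
  intro i j hij
  rcases lt_or_ge i 1 with hi | hi
  · exact (seqOf_of_lt_one hi).symm ▸ le_top
  rw [seqOf_maxTails A B hi, seqOf_maxTails A B (hi.trans hij)]
  exact max_le_max (hA (by omega)) (hB (by omega))

lemma exists_rr_rSeq_eq {L : List ℝ} (hL : L.Pairwise (· ≥ ·)) :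
    ∃ h : ℝ[X], RR h ∧ rSeq h = seqOf L := by
  have hmonic : ((L : Multiset ℝ).map fun t => X - C t).prod.Monic :=
    monic_multiset_prod_of_monic _ _ fun t _ => monic_X_sub_C t
  refine ⟨_, ⟨hmonic.leadingCoeff ▸ one_pos, ?_⟩, ?_⟩
  · rw [roots_multiset_prod_X_sub_C, natDegree_multiset_prod_X_sub_C_eq_card]
  · unfold rSeq
    rw [roots_multiset_prod_X_sub_C, Multiset.coe_sort, List.mergeSort_of_pairwise]
    simpa using hL

lemma antitone_rSeq (f : ℝ[X]) : Antitone (rSeq f) :=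
  antitone_seqOf_iff.2 (Multiset.pairwise_sort _ _)

lemma rSeq_of_lt_one (f : ℝ[X]) {i : ℤ} (hi : i < 1) : rSeq f i = ⊤ := seqOf_of_lt_one hi

lemma exists_rr_rSeq_eq_max (f g : ℝ[X]) :
    ∃ h : ℝ[X], RR h ∧
      ∀ i, 1 ≤ i → rSeq h i = max (rSeq f (i + 1)) (rSeq g (i + 1)) := by
  obtain ⟨h, hRR, hh⟩ := exists_rr_rSeq_eq (antitone_seqOf_iff.1
    (antitone_seqOf_maxTails (antitone_rSeq f) (antitone_rSeq g)))
  exact ⟨h, hRR, fun i hi => hh ▸ seqOf_maxTails _ _ hi⟩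

lemma pqInt_one_zero_iff {h f : ℝ[X]} :
    PQInt 1 0 h f ↔ ∀ i, rSeq f (i + 1) ≤ rSeq h i ∧ rSeq h i ≤ rSeq f i := by
  simp [PQInt]

lemma pqInt_one_one_iff {f g : ℝ[X]} :
    PQInt 1 1 f g ↔ ∀ i, rSeq g (i + 1) ≤ rSeq f i ∧ rSeq f (i + 1) ≤ rSeq g i := by
  simp only [PQInt, Nat.cast_one, forall_and]
  exact and_congr_right'
    ⟨fun h i => by simpa using h (i + 1), fun h i => by simpa using h (i - 1)⟩

lemma pqInt_one_zero_of_rSeq_eq_max {h f g : ℝ[X]} (hgf : ∀ i, rSeq g (i + 1) ≤ rSeq f i)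
    (hh : ∀ i, 1 ≤ i → rSeq h i = max (rSeq f (i + 1)) (rSeq g (i + 1))) : PQInt 1 0 h f := by
  refine pqInt_one_zero_iff.2 fun i => ?_
  rcases lt_or_ge i 1 with hi | hi
  · simp [rSeq_of_lt_one _ hi]
  rw [hh i hi]
  exact ⟨le_max_left _ _, max_le (antitone_rSeq f (by omega)) (hgf i)⟩

theorem stmt5_general (f g : Polynomial ℝ) :
    PQInt 1 1 f g ↔ ∃ h : Polynomial ℝ, RR h ∧ PQInt 1 0 h f ∧ PQInt 1 0 h g := by
  rw [pqInt_one_one_iff]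
  constructor
  · intro hfg
    obtain ⟨h, hRR, hh⟩ := exists_rr_rSeq_eq_max f g
    exact ⟨h, hRR, pqInt_one_zero_of_rSeq_eq_max (fun i => (hfg i).1) hh,
      pqInt_one_zero_of_rSeq_eq_max (fun i => (hfg i).2) fun i hi =>
        (hh i hi).trans (max_comm _ _)⟩
  · rintro ⟨h, -, hf, hg⟩ i
    rw [pqInt_one_zero_iff] at hf hg
    exact ⟨(hg i).1.trans (hf i).2, (hf i).1.trans (hg i).2⟩

theorem stmt5 (f g : Polynomial ℝ) (hf : RR f) (hg : RR g) :
    PQInt 1 1 f g ↔ ∃ h : Polynomial ℝ, RR h ∧ PQInt 1 0 h f ∧ PQInt 1 0 h g :=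
  stmt5_general f g
end
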